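/- Define the single-imputation mean estimator under posterior-draw imputation μ̂_SI,PD = μ + σ·(Z̄_obs + (n_mis/n)·√(U_obs/U_PD)·(Z_PD + Z̄_imp)). If ν_PD > 1 then E[μ̂_SI,PD] = μ. If moreover ν_PD > 2 then Var(μ̂_SI,PD) = (σ²/n_obs)·(1 + n_mis·(n_obs − 1)/(n·(n_obs + ν_prior − 3))). -/

import Mathlib

/-!
Write the estimator as `μ + σ (Z + c S T)` with `c = n_mis / n`, `S = √(U_obs / U_PD)` and
`T = Z_PD + Z_imp ~ N(0, 1/n_obs + 1/n_mis)`. Since `Z`, `S`, `T` are independent and `Z`, `T` are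
centred, the mean is `μ` as soon as `S` is integrable, and the variance is
`σ² (Var Z + c² E[S²] Var T)`. The moments `E[X^p] = Γ(a + p) / (Γ(a) r^p)` (for `a + p > 0`) of
the gamma law give `E[U_PD^(-1/2)] < ∞` when `ν_PD > 1`, and
`E[S²] = E[U_obs] E[U_PD⁻¹] = (n_obs - 1) / (ν_PD - 2)` when `ν_PD > 2`.
-/

open MeasureTheory Real Set

namespace ProbabilityTheory

section GammaMoments

variable {a r : ℝ}

lemma gammaPDFReal_of_neg {x : ℝ} (hx : x < 0) : gammaPDFReal a r x = 0 :=
  if_neg hx.not_ge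

lemma ae_nonneg_gammaMeasure (a r : ℝ) : ∀ᵐ x ∂gammaMeasure a r, 0 ≤ x := by
  simp only [ae_iff, not_le]
  change gammaMeasure a r (Iio 0) = 0
  rw [gammaMeasure, withDensity_apply _ measurableSet_Iio]
  exact lintegral_gammaPDF_of_nonpos le_rfl

lemma integrable_gammaMeasure_iff (ha : 0 < a) (hr : 0 < r) {f : ℝ → ℝ} :
    Integrable f (gammaMeasure a r) ↔
      IntegrableOn (fun x ↦ f x * gammaPDFReal a r x) (Ioi 0) := by
  rw [gammaMeasure, integrable_withDensity_iff (f := gammaPDF a r)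
    (measurable_gammaPDFReal a r).ennreal_ofReal (.of_forall fun _ ↦ ENNReal.ofReal_lt_top),
    ← integrableOn_Ici_iff_integrableOn_Ioi,
    integrableOn_iff_integrable_of_support_subset]
  · simp only [gammaPDF, ENNReal.toReal_ofReal (gammaPDFReal_nonneg ha hr _)]
  · intro x hx
    by_contra hneg
    exact hx (by simp [gammaPDFReal_of_neg (not_le.mp hneg)])

lemma integral_gammaMeasure (ha : 0 < a) (hr : 0 < r) (f : ℝ → ℝ) :
    ∫ x, f x ∂gammaMeasure a r = ∫ x in Ioi 0, f x * gammaPDFReal a r x := by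
  rw [gammaMeasure, integral_withDensity_eq_integral_toReal_smul (f := gammaPDF a r)
    (measurable_gammaPDFReal a r).ennreal_ofReal (.of_forall fun _ ↦ ENNReal.ofReal_lt_top),
    ← integral_Ici_eq_integral_Ioi, ← setIntegral_eq_integral_of_forall_compl_eq_zero]
  · refine setIntegral_congr_fun measurableSet_Ici fun x _ ↦ ?_
    simp [gammaPDF, ENNReal.toReal_ofReal (gammaPDFReal_nonneg ha hr _), mul_comm]
  · intro x hx
    simp [gammaPDF, gammaPDFReal_of_neg (not_le.mp hx)]

lemma rpow_mul_gammaPDFReal {x : ℝ} (hx : 0 < x) (p : ℝ) :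
    x ^ p * gammaPDFReal a r x = r ^ a / Gamma a * (x ^ (a + p - 1) * exp (-(r * x))) := by
  rw [gammaPDFReal, if_pos hx.le, show a + p - 1 = p + (a - 1) by ring, rpow_add hx]
  ring

lemma setIntegral_rpow_mul_gammaPDFReal {p : ℝ} (ha : 0 < a) (hr : 0 < r) (hap : 0 < a + p) :
    ∫ x in Ioi 0, x ^ p * gammaPDFReal a r x = Gamma (a + p) / (Gamma a * r ^ p) := by
  rw [setIntegral_congr_fun measurableSet_Ioi fun x hx ↦ rpow_mul_gammaPDFReal hx p,
    integral_const_mul, integral_rpow_mul_exp_neg_mul_Ioi hap hr, div_rpow zero_le_one hr.le,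
    one_rpow, rpow_add hr]
  field_simp

lemma integrable_rpow_gammaMeasure {p : ℝ} (ha : 0 < a) (hr : 0 < r) (hap : 0 < a + p) :
    Integrable (fun x ↦ x ^ p) (gammaMeasure a r) := by
  rw [integrable_gammaMeasure_iff ha hr]
  -- a non-integrable function has integral `0`, and this one has a positive integral
  refine Integrable.of_integral_ne_zero ?_
  rw [setIntegral_rpow_mul_gammaPDFReal ha hr hap]
  have := Gamma_pos_of_pos hap
  have := Gamma_pos_of_pos ha
  positivity

lemma integral_rpow_gammaMeasure {p : ℝ} (ha : 0 < a) (hr : 0 < r) (hap : 0 < a + p) :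
    ∫ x, x ^ p ∂gammaMeasure a r = Gamma (a + p) / (Gamma a * r ^ p) := by
  rw [integral_gammaMeasure ha hr, setIntegral_rpow_mul_gammaPDFReal ha hr hap]

lemma integrable_id_gammaMeasure (ha : 0 < a) (hr : 0 < r) :
    Integrable (fun x ↦ x) (gammaMeasure a r) := by
  simpa using integrable_rpow_gammaMeasure (p := 1) ha hr (by linarith)

lemma integral_id_gammaMeasure (ha : 0 < a) (hr : 0 < r) :
    ∫ x, x ∂gammaMeasure a r = a / r := by
  have h := integral_rpow_gammaMeasure (p := 1) ha hr (by linarith)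
  rw [Gamma_add_one ha.ne'] at h
  simp only [rpow_one] at h
  rw [h]
  field_simp [(Gamma_pos_of_pos ha).ne']

lemma integrable_inv_gammaMeasure (ha : 1 < a) (hr : 0 < r) :
    Integrable (fun x ↦ x⁻¹) (gammaMeasure a r) := by
  simpa [rpow_neg_one] using
    integrable_rpow_gammaMeasure (p := -1) (by linarith) hr (by linarith)

lemma integral_inv_gammaMeasure (ha : 1 < a) (hr : 0 < r) :
    ∫ x, x⁻¹ ∂gammaMeasure a r = r / (a - 1) := by
  have h := integral_rpow_gammaMeasure (a := a) (p := -1) (by linarith) hr (by linarith)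
  have hΓ : Gamma a = (a - 1) * Gamma (a - 1) := by
    rw [← Gamma_add_one (by linarith), sub_add_cancel]
  simp only [rpow_neg_one, ← sub_eq_add_neg, hΓ] at h
  rw [h]
  field_simp [(Gamma_pos_of_pos (sub_pos.mpr ha)).ne']

lemma integrable_sqrt_gammaMeasure (ha : 0 < a) (hr : 0 < r) :
    Integrable (fun x ↦ √x) (gammaMeasure a r) := by
  refine (integrable_rpow_gammaMeasure (p := 1 / 2) ha hr (by linarith)).congr ?_
  exact .of_forall fun x ↦ (sqrt_eq_rpow x).symm

lemma integrable_inv_sqrt_gammaMeasure (ha : 1 / 2 < a) (hr : 0 < r) :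
    Integrable (fun x ↦ (√x)⁻¹) (gammaMeasure a r) := by
  refine (integrable_rpow_gammaMeasure (p := -(1 / 2)) (by linarith) hr (by linarith)).congr ?_
  filter_upwards [ae_nonneg_gammaMeasure a r] with x hx
  rw [sqrt_eq_rpow, rpow_neg hx]

end GammaMoments

variable {Ω : Type*} [MeasurableSpace Ω] {P : Measure Ω}

section Products

variable {X Y : Ω → ℝ}

lemma IndepFun.memLp_two_mul (hXY : IndepFun X Y P) (hX : MemLp X 2 P) (hY : MemLp Y 2 P) :
    MemLp (fun ω ↦ X ω * Y ω) 2 P := by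
  refine (memLp_two_iff_integrable_sq (hX.1.mul hY.1)).mpr ?_
  show Integrable (fun ω ↦ (X ω * Y ω) ^ 2) P
  simp only [mul_pow]
  exact (hXY.comp (measurable_id.pow_const 2) (measurable_id.pow_const 2)).integrable_mul
    hX.integrable_sq hY.integrable_sq

lemma IndepFun.variance_mul_of_integral_eq_zero [IsProbabilityMeasure P] (hXY : IndepFun X Y P)
    (hX : MemLp X 2 P) (hY : MemLp Y 2 P) (hY0 : ∫ ω, Y ω ∂P = 0) :
    Var[fun ω ↦ X ω * Y ω; P] = (∫ ω, X ω ^ 2 ∂P) * Var[Y; P] := by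
  have hXY2 : IndepFun (fun ω ↦ X ω ^ 2) (fun ω ↦ Y ω ^ 2) P :=
    hXY.comp (measurable_id.pow_const 2) (measurable_id.pow_const 2)
  rw [variance_eq_sub (hXY.memLp_two_mul hX hY), variance_eq_sub hY]
  simp only [Pi.pow_apply, mul_pow]
  rw [hXY2.integral_fun_mul_eq_mul_integral (hX.1.pow 2) (hY.1.pow 2),
    hXY.integral_fun_mul_eq_mul_integral hX.1 hY.1, hY0]
  ring

end Products

lemma HasLaw.integrable_comp {𝓧 : Type*} [MeasurableSpace 𝓧] {U : Ω → 𝓧} {μ : Measure 𝓧}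
    {g : 𝓧 → ℝ} (hU : HasLaw U μ P) (hg : Integrable g μ) : Integrable (fun ω ↦ g (U ω)) P := by
  rw [← hU.map_eq] at hg
  exact hg.comp_aemeasurable hU.aemeasurable

section GammaRatio

variable {U V : Ω → ℝ} {a r b s : ℝ}

lemma HasLaw.ae_nonneg_of_gammaMeasure (hU : HasLaw U (gammaMeasure a r) P) :
    ∀ᵐ ω ∂P, 0 ≤ U ω := by
  have h := ae_nonneg_gammaMeasure a r
  rw [← hU.map_eq] at h
  exact (ae_map_iff hU.aemeasurable measurableSet_Ici).mp h

lemma integrable_sqrt_div_of_gammaMeasure (hUV : IndepFun U V P)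
    (hU : HasLaw U (gammaMeasure a r) P) (hV : HasLaw V (gammaMeasure b s) P)
    (ha : 0 < a) (hr : 0 < r) (hb : 1 / 2 < b) (hs : 0 < s) :
    Integrable (fun ω ↦ √(U ω / V ω)) P := by
  have hUV' : IndepFun (fun ω ↦ √(U ω)) (fun ω ↦ (√(V ω))⁻¹) P :=
    hUV.comp continuous_sqrt.measurable continuous_sqrt.measurable.inv
  refine (hUV'.integrable_mul
    (hU.integrable_comp (integrable_sqrt_gammaMeasure ha hr))
    (hV.integrable_comp (integrable_inv_sqrt_gammaMeasure hb hs))).congr ?_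
  filter_upwards [hU.ae_nonneg_of_gammaMeasure] with ω hω
  rw [Pi.mul_apply, sqrt_div hω, div_eq_mul_inv]

lemma sq_sqrt_div_ae_eq_of_gammaMeasure (hU : HasLaw U (gammaMeasure a r) P)
    (hV : HasLaw V (gammaMeasure b s) P) :
    (fun ω ↦ √(U ω / V ω) ^ 2) =ᵐ[P] fun ω ↦ U ω * (V ω)⁻¹ := by
  filter_upwards [hU.ae_nonneg_of_gammaMeasure, hV.ae_nonneg_of_gammaMeasure] with ω hU hV
  rw [sq_sqrt (div_nonneg hU hV), div_eq_mul_inv]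

lemma memLp_sqrt_div_of_gammaMeasure (hUV : IndepFun U V P)
    (hU : HasLaw U (gammaMeasure a r) P) (hV : HasLaw V (gammaMeasure b s) P)
    (ha : 0 < a) (hr : 0 < r) (hb : 1 < b) (hs : 0 < s) :
    MemLp (fun ω ↦ √(U ω / V ω)) 2 P := by
  refine (memLp_two_iff_integrable_sq ?_).mpr ?_
  · exact (hU.aemeasurable.div hV.aemeasurable).sqrt.aestronglyMeasurable
  have hUV' : IndepFun U (fun ω ↦ (V ω)⁻¹) P := hUV.comp measurable_id measurable_inv
  refine (hUV'.integrable_mul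
    (hU.integrable_comp (integrable_id_gammaMeasure ha hr))
    (hV.integrable_comp (integrable_inv_gammaMeasure hb hs))).congr ?_
  exact (sq_sqrt_div_ae_eq_of_gammaMeasure hU hV).symm

lemma integral_sq_sqrt_div_of_gammaMeasure (hUV : IndepFun U V P)
    (hU : HasLaw U (gammaMeasure a r) P) (hV : HasLaw V (gammaMeasure b s) P)
    (ha : 0 < a) (hr : 0 < r) (hb : 1 < b) (hs : 0 < s) :
    ∫ ω, √(U ω / V ω) ^ 2 ∂P = a / r * (s / (b - 1)) := by
  have hUV' : IndepFun U (fun ω ↦ (V ω)⁻¹) P := hUV.comp measurable_id measurable_inv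
  rw [integral_congr_ae (sq_sqrt_div_ae_eq_of_gammaMeasure hU hV),
    hUV'.integral_fun_mul_eq_mul_integral
      hU.aemeasurable.aestronglyMeasurable hV.aemeasurable.inv.aestronglyMeasurable]
  have hEV : ∫ ω, (V ω)⁻¹ ∂P = s / (b - 1) := by
    rw [← integral_inv_gammaMeasure hb hs]
    exact hV.integral_comp measurable_inv.aestronglyMeasurable
  rw [hU.integral_eq, integral_id_gammaMeasure ha hr, hEV]

end GammaRatio

section Estimator

variable [IsProbabilityMeasure P] {Z S T : Ω → ℝ}

lemma integral_const_add_mul_add_mul_mul (μ σ c : ℝ) (hST : IndepFun S T P)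
    (hZ : Integrable Z P) (hZ0 : ∫ ω, Z ω ∂P = 0) (hS : Integrable S P) (hT : Integrable T P)
    (hT0 : ∫ ω, T ω ∂P = 0) :
    ∫ ω, μ + σ * (Z ω + c * S ω * T ω) ∂P = μ := by
  have hSTi : Integrable (fun ω ↦ S ω * T ω) P := hST.integrable_mul hS hT
  have hST0 : ∫ ω, S ω * T ω ∂P = 0 := by
    rw [hST.integral_fun_mul_eq_mul_integral hS.1 hT.1, hT0, mul_zero]
  have hsum : Integrable (fun ω ↦ Z ω + c * (S ω * T ω)) P := hZ.add (hSTi.const_mul c)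
  simp_rw [mul_assoc c]
  rw [integral_add (integrable_const μ) (hsum.const_mul σ), integral_const_mul,
    integral_add hZ (hSTi.const_mul c), integral_const_mul, hZ0, hST0]
  simp

lemma variance_const_add_mul_add_mul_mul (μ σ c : ℝ) (hST : IndepFun S T P)
    (hZST : IndepFun Z (fun ω ↦ S ω * T ω) P) (hZ : MemLp Z 2 P) (hS : MemLp S 2 P)
    (hT : MemLp T 2 P) (hT0 : ∫ ω, T ω ∂P = 0) :
    Var[fun ω ↦ μ + σ * (Z ω + c * S ω * T ω); P]
      = σ ^ 2 * (Var[Z; P] + c ^ 2 * ((∫ ω, S ω ^ 2 ∂P) * Var[T; P])) := by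
  have hSTc : MemLp (fun ω ↦ c * (S ω * T ω)) 2 P := (hST.memLp_two_mul hS hT).const_mul c
  have hZSTc : IndepFun Z (fun ω ↦ c * (S ω * T ω)) P :=
    hZST.comp measurable_id (measurable_const_mul c)
  have hsum : AEStronglyMeasurable (fun ω ↦ σ * (Z ω + c * (S ω * T ω))) P :=
    (hZ.1.add hSTc.1).const_mul σ
  simp_rw [mul_assoc c]
  rw [variance_const_add hsum, variance_const_mul,
    hZSTc.variance_fun_add hZ hSTc, variance_const_mul,
    hST.variance_mul_of_integral_eq_zero hS hT hT0]

end Estimator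

section Independence

variable {U Z V W Y R : Ω → ℝ}

lemma iIndepFun.indepFun_sqrt_div_add (h : iIndepFun ![U, Z, V, W, Y, R] P)
    (hm : ∀ i, Measurable (![U, Z, V, W, Y, R] i)) :
    IndepFun (fun ω ↦ √(U ω / V ω)) (fun ω ↦ W ω + Y ω) P :=
  (h.indepFun_prodMk_prodMk hm 0 2 3 4 (by decide) (by decide) (by decide) (by decide)).comp
    (measurable_fst.div measurable_snd).sqrt (measurable_fst.add measurable_snd)

lemma iIndepFun.indepFun_sqrt_div_mul_add (h : iIndepFun ![U, Z, V, W, Y, R] P)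
    (hm : ∀ i, Measurable (![U, Z, V, W, Y, R] i)) :
    IndepFun Z (fun ω ↦ √(U ω / V ω) * (W ω + Y ω)) P :=
  (h.indepFun_finset {1} {0, 2, 3, 4} (by decide) hm).comp
    (φ := fun v : ({1} : Finset (Fin 6)) → ℝ ↦ v ⟨1, by decide⟩)
    (ψ := fun v : ({0, 2, 3, 4} : Finset (Fin 6)) → ℝ ↦
      √(v ⟨0, by decide⟩ / v ⟨2, by decide⟩) * (v ⟨3, by decide⟩ + v ⟨4, by decide⟩))
    (measurable_pi_apply _) (by fun_prop)

end Independence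

end ProbabilityTheory

open MeasureTheory ProbabilityTheory NNReal

theorem stmt6_general
    {Ω : Type*} [MeasurableSpace Ω] (P : Measure Ω) [IsProbabilityMeasure P]
    (μ σ : ℝ)
    (n_obs n_mis : ℕ) (hnobs : 2 ≤ n_obs) (hnmis : 2 ≤ n_mis)
    (ν_prior : ℝ)
    (U_obs Z_obs U_PD Z_PD Z_imp U_imp : Ω → ℝ)
    (hUmeas : Measurable U_obs) (hZmeas : Measurable Z_obs)
    (hUPDmeas : Measurable U_PD) (hZPDmeas : Measurable Z_PD)
    (hZimpmeas : Measurable Z_imp) (hUimpmeas : Measurable U_imp)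
    (hU : P.map U_obs = gammaMeasure (((n_obs : ℝ) - 1) / 2) (1 / 2))
    (hZ : P.map Z_obs = gaussianReal 0 (1 / (n_obs : ℝ≥0)))
    (hUPD : P.map U_PD = gammaMeasure (((n_obs : ℝ) - 1 + ν_prior) / 2) (1 / 2))
    (hZPD : P.map Z_PD = gaussianReal 0 (1 / (n_obs : ℝ≥0)))
    (hZimp : P.map Z_imp = gaussianReal 0 (1 / (n_mis : ℝ≥0)))
    (hindep : iIndepFun
      ![U_obs, Z_obs, U_PD, Z_PD, Z_imp, U_imp] P) :
    ((n_obs : ℝ) - 1 + ν_prior > 1 →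
      (∫ ω, μ + σ * (Z_obs ω
          + ((n_mis : ℝ) / ((n_obs : ℝ) + (n_mis : ℝ)))
              * Real.sqrt (U_obs ω / U_PD ω) * (Z_PD ω + Z_imp ω)) ∂P) = μ)
    ∧ ((n_obs : ℝ) - 1 + ν_prior > 2 →
      variance (fun ω => μ + σ * (Z_obs ω
          + ((n_mis : ℝ) / ((n_obs : ℝ) + (n_mis : ℝ)))
              * Real.sqrt (U_obs ω / U_PD ω) * (Z_PD ω + Z_imp ω))) P
        = σ ^ 2 / (n_obs : ℝ)
            * (1 + (n_mis : ℝ) * ((n_obs : ℝ) - 1)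
                / (((n_obs : ℝ) + (n_mis : ℝ)) * ((n_obs : ℝ) + ν_prior - 3)))) := by
  have hn : (2 : ℝ) ≤ n_obs := by exact_mod_cast hnobs
  have hm : (n_mis : ℝ) ≠ 0 := Nat.cast_ne_zero.mpr (by omega)
  have hmeas : ∀ i, Measurable (![U_obs, Z_obs, U_PD, Z_PD, Z_imp, U_imp] i) := by
    intro i; fin_cases i <;> assumption
  have hUV : IndepFun U_obs U_PD P := hindep.indepFun (by decide : (0 : Fin 6) ≠ 2)
  have hST := hindep.indepFun_sqrt_div_add hmeas
  have hUlaw : HasLaw U_obs _ P := ⟨hUmeas.aemeasurable, hU⟩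
  have hVlaw : HasLaw U_PD _ P := ⟨hUPDmeas.aemeasurable, hUPD⟩
  have hZlaw : HasLaw Z_obs _ P := ⟨hZmeas.aemeasurable, hZ⟩
  have hTlaw : HasLaw (fun ω ↦ Z_PD ω + Z_imp ω) _ P := ⟨(hZPDmeas.add hZimpmeas).aemeasurable,
    gaussianReal_add_gaussianReal_of_indepFun (hindep.indepFun (by decide : (3 : Fin 6) ≠ 4))
      hZPD hZimp⟩
  have hT0 : ∫ ω, Z_PD ω + Z_imp ω ∂P = 0 := by
    rw [hTlaw.integral_eq, integral_id_gaussianReal, add_zero]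
  have ha : 0 < ((n_obs : ℝ) - 1) / 2 := by linarith
  refine ⟨fun hν ↦ ?_, fun hν ↦ ?_⟩
  · refine integral_const_add_mul_add_mul_mul μ σ _ hST hZlaw.hasGaussianLaw.integrable
      (by rw [hZlaw.integral_eq, integral_id_gaussianReal])
      (integrable_sqrt_div_of_gammaMeasure hUV hUlaw hVlaw ha one_half_pos (by linarith)
        one_half_pos) hTlaw.hasGaussianLaw.integrable hT0
  · rw [variance_const_add_mul_add_mul_mul μ σ _ hST (hindep.indepFun_sqrt_div_mul_add hmeas)
      hZlaw.hasGaussianLaw.memLp_two (memLp_sqrt_div_of_gammaMeasure hUV hUlaw hVlaw ha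
        one_half_pos (by linarith) one_half_pos) hTlaw.hasGaussianLaw.memLp_two hT0,
      hZlaw.variance_eq, hTlaw.variance_eq, variance_id_gaussianReal, variance_id_gaussianReal,
      integral_sq_sqrt_div_of_gammaMeasure hUV hUlaw hVlaw ha one_half_pos (by linarith)
        one_half_pos,
      show ((n_obs : ℝ) - 1 + ν_prior) / 2 - 1 = (n_obs + ν_prior - 3) / 2 by ring]
    have : (n_obs : ℝ) + ν_prior - 3 ≠ 0 := by linarith
    push_cast
    field_simp
    ring

/-- mean and variance of the single-imputation mean estimator under
posterior-draw imputation
`μ̂_SI,PD = μ + σ·(Z̄_obs + (n_mis/n)·√(U_obs/U_PD)·(Z_PD + Z̄_imp))`. -/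
theorem stmt6
    {Ω : Type*} [MeasurableSpace Ω] (P : Measure Ω) [IsProbabilityMeasure P]
    (μ σ : ℝ) (hσ : 0 < σ)
    (n_obs n_mis : ℕ) (hnobs : 2 ≤ n_obs) (hnmis : 2 ≤ n_mis)
    (ν_prior : ℝ) (hνPD : 0 < (n_obs : ℝ) - 1 + ν_prior)
    (U_obs Z_obs U_PD Z_PD Z_imp U_imp : Ω → ℝ)
    (hUmeas : Measurable U_obs) (hZmeas : Measurable Z_obs)
    (hUPDmeas : Measurable U_PD) (hZPDmeas : Measurable Z_PD)
    (hZimpmeas : Measurable Z_imp) (hUimpmeas : Measurable U_imp)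
    (hU : P.map U_obs = gammaMeasure (((n_obs : ℝ) - 1) / 2) (1 / 2))
    (hZ : P.map Z_obs = gaussianReal 0 (1 / (n_obs : ℝ≥0)))
    (hUPD : P.map U_PD = gammaMeasure (((n_obs : ℝ) - 1 + ν_prior) / 2) (1 / 2))
    (hZPD : P.map Z_PD = gaussianReal 0 (1 / (n_obs : ℝ≥0)))
    (hZimp : P.map Z_imp = gaussianReal 0 (1 / (n_mis : ℝ≥0)))
    (hUimp : P.map U_imp = gammaMeasure (((n_mis : ℝ) - 1) / 2) (1 / 2))
    (hindep : iIndepFun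
      ![U_obs, Z_obs, U_PD, Z_PD, Z_imp, U_imp] P) :
    ((n_obs : ℝ) - 1 + ν_prior > 1 →
      (∫ ω, μ + σ * (Z_obs ω
          + ((n_mis : ℝ) / ((n_obs : ℝ) + (n_mis : ℝ)))
              * Real.sqrt (U_obs ω / U_PD ω) * (Z_PD ω + Z_imp ω)) ∂P) = μ)
    ∧ ((n_obs : ℝ) - 1 + ν_prior > 2 →
      variance (fun ω => μ + σ * (Z_obs ω
          + ((n_mis : ℝ) / ((n_obs : ℝ) + (n_mis : ℝ)))
              * Real.sqrt (U_obs ω / U_PD ω) * (Z_PD ω + Z_imp ω))) P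
        = σ ^ 2 / (n_obs : ℝ)
            * (1 + (n_mis : ℝ) * ((n_obs : ℝ) - 1)
                / (((n_obs : ℝ) + (n_mis : ℝ)) * ((n_obs : ℝ) + ν_prior - 3)))) :=
  stmt6_general P μ σ n_obs n_mis hnobs hnmis ν_prior U_obs Z_obs U_PD Z_PD Z_imp U_imp hUmeas
    hZmeas hUPDmeas hZPDmeas hZimpmeas hUimpmeas hU hZ hUPD hZPD hZimp hindep
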